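/- arXiv:2007.14483 — 2 statements merged into one kernel-verified Lean document; each statement's English description precedes it below -/
import Mathlib

section
/- In a commutative idempotent involutive residuated lattice, for every element x, one has 0_x ≤ 0 ≤ 1 ≤ 1_x, and 0_x · 1_x = 0_x. -/
/-!
Negation `¬` is an order-reversing involution with `¬1 = 0`, because `y ≤ ¬1 ↔ 1·y ≤ 0`.
Idempotency gives `0_x = 0_x·0_x ≤ x·¬x ≤ 0`, and `0 ≤ ¬0 = 1` since `0·0 ≤ 0`. As `¬1_x ≤ x ∧ ¬x = 0_x`,
we get `¬1_x ≤ 0 = ¬1`, i.e. `1 ≤ 1_x`. Finally multiplication distributes over joins and both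
`0_x·x` and `0_x·¬x` lie below `0_x`, while `0_x = 0_x·1 ≤ 0_x·1_x`.
-/

/-- A commutative idempotent involutive residuated lattice. -/
class CIdInRL (α : Type*) extends Lattice α, CommMonoid α, Zero α where
  arrow : α → α → α
  residuation : ∀ x y z : α, x * y ≤ z ↔ y ≤ arrow x z
  idem : ∀ x : α, x * x = x
  involutive : ∀ x : α, arrow (arrow x 0) 0 = x

namespace CIdInRL
variable {α : Type*} [CIdInRL α]
/-- linear negation ¬x := x → 0 -/
def neg (x : α) : α := arrow x 0
/-- 0_x := x ∧ ¬x -/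
def zx (x : α) : α := x ⊓ neg x
/-- 1_x := x ∨ ¬x -/
def ox (x : α) : α := x ⊔ neg x
/-- monoidal order x ⊑ y iff x·y = x -/
def mleq (x y : α) : Prop := x * y = x
end CIdInRL

namespace CIdInRL

variable {α : Type*} [CIdInRL α] {x y z w : α}

instance : IsOrderedMonoid α where
  mul_le_mul_left a b h c := by
    rw [mul_comm a, mul_comm b]
    exact (residuation c a _).2 (h.trans ((residuation c b _).1 le_rfl))

theorem mul_sup_le (hy : x * y ≤ w) (hz : x * z ≤ w) : x * (y ⊔ z) ≤ w :=
  (residuation _ _ _).2 (sup_le ((residuation _ _ _).1 hy) ((residuation _ _ _).1 hz))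

theorem le_neg_iff : y ≤ neg x ↔ x * y ≤ 0 :=
  (residuation x y 0).symm

theorem mul_neg_le_zero (x : α) : x * neg x ≤ 0 :=
  le_neg_iff.1 le_rfl

theorem neg_neg (x : α) : neg (neg x) = x :=
  involutive x

theorem neg_antitone : Antitone (neg : α → α) := fun _ y h =>
  le_neg_iff.2 <| (mul_le_mul_left h (neg y)).trans (mul_neg_le_zero y)

theorem neg_le_neg_iff : neg x ≤ neg y ↔ y ≤ x :=
  ⟨fun h => neg_neg x ▸ neg_neg y ▸ neg_antitone h, fun h => neg_antitone h⟩

theorem neg_one : neg (1 : α) = 0 :=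
  eq_of_forall_le_iff fun y => by rw [le_neg_iff, one_mul]

theorem neg_zero : neg (0 : α) = 1 := by
  rw [← neg_one, neg_neg]

theorem zero_le_one : (0 : α) ≤ 1 := by
  rw [← neg_zero]
  exact le_neg_iff.2 (idem 0).le

theorem zx_neg (x : α) : zx (neg x) = zx x := by
  rw [zx, zx, neg_neg, inf_comm]

theorem neg_ox_le_zx (x : α) : neg (ox x) ≤ zx x :=
  le_inf ((neg_antitone (le_sup_right : neg x ≤ ox x)).trans_eq (neg_neg x)) (neg_antitone le_sup_left)

theorem zx_le_zero (x : α) : zx x ≤ 0 :=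
  calc zx x = zx x * zx x := (idem _).symm
    _ ≤ x * neg x := mul_le_mul' inf_le_left inf_le_right
    _ ≤ 0 := mul_neg_le_zero x

theorem one_le_ox (x : α) : 1 ≤ ox x := by
  rw [← neg_le_neg_iff, neg_one]
  exact (neg_ox_le_zx x).trans (zx_le_zero x)

theorem zx_mul_self_le (x : α) : zx x * x ≤ zx x := by
  have h_zero : zx x * x ≤ 0 :=
    (mul_le_mul_left inf_le_right x).trans (mul_comm x (neg x) ▸ mul_neg_le_zero x)
  refine le_inf ((mul_le_mul_left inf_le_left x).trans_eq (idem x)) (le_neg_iff.2 ?_)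
  rwa [mul_left_comm, idem]

theorem zx_mul_neg_le (x : α) : zx x * neg x ≤ zx x :=
  zx_neg x ▸ zx_mul_self_le (neg x)

theorem zx_mul_ox (x : α) : zx x * ox x = zx x :=
  le_antisymm (mul_sup_le (zx_mul_self_le x) (zx_mul_neg_le x))
    (calc zx x = zx x * 1 := (mul_one _).symm
      _ ≤ zx x * ox x := mul_le_mul_right (one_le_ox x) _)

end CIdInRL

open CIdInRL in
theorem stmt1 {α : Type*} [CIdInRL α] (x : α) :
    zx x ≤ 0 ∧ (0 : α) ≤ 1 ∧ (1 : α) ≤ ox x ∧ zx x * ox x = zx x :=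
  ⟨zx_le_zero x, CIdInRL.zero_le_one, one_le_ox x, zx_mul_ox x⟩
end

section
/- In a commutative idempotent involutive residuated lattice, if x, y are both positive (1 ≤ x and 1 ≤ y) then x·y = x ∨ y, and if x, y are both negative (x ≤ 1 and y ≤ 1) then x·y = x ∧ y. -/
/-!
Residuation makes multiplication monotone, so idempotency squeezes `x * y` between `x ⊓ y`
and `x ⊔ y`. Multiplying by a positive element moves up and by a negative one moves down, which
gives the reverse inequalities.
-/

namespace CIdInRL

variable {α : Type*} [CIdInRL α]

theorem mul_le_mul_of_le_right {a b : α} (h : a ≤ b) (c : α) : c * a ≤ c * b :=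
  (residuation c a (c * b)).mpr (h.trans ((residuation c b (c * b)).mp le_rfl))

instance inst_s18 : IsOrderedMonoid α where
  mul_le_mul_left a b h c := by
    simpa only [mul_comm _ c] using mul_le_mul_of_le_right h c

theorem mul_le_sup (x y : α) : x * y ≤ x ⊔ y :=
  calc x * y ≤ (x ⊔ y) * (x ⊔ y) := mul_le_mul' le_sup_left le_sup_right
    _ = x ⊔ y := idem _

theorem inf_le_mul (x y : α) : x ⊓ y ≤ x * y :=
  calc x ⊓ y = (x ⊓ y) * (x ⊓ y) := (idem _).symm
    _ ≤ x * y := mul_le_mul' inf_le_left inf_le_right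

theorem mul_eq_sup_of_one_le {x y : α} (hx : 1 ≤ x) (hy : 1 ≤ y) : x * y = x ⊔ y :=
  (mul_le_sup x y).antisymm (sup_le (le_mul_of_one_le_right' hy) (le_mul_of_one_le_left' hx))

theorem mul_eq_inf_of_le_one {x y : α} (hx : x ≤ 1) (hy : y ≤ 1) : x * y = x ⊓ y :=
  (le_inf (mul_le_of_le_one_right' hy) (mul_le_of_le_one_left' hx)).antisymm (inf_le_mul x y)

end CIdInRL

open CIdInRL in
theorem stmt18 {α : Type*} [CIdInRL α] (x y : α) :
    ((1 ≤ x → 1 ≤ y → x * y = x ⊔ y) ∧ (x ≤ 1 → y ≤ 1 → x * y = x ⊓ y)) :=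
  ⟨mul_eq_sup_of_one_le, mul_eq_inf_of_le_one⟩
end
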